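/- For a monotone Boolean function f and a positive instance x, every MC-explanation of x matches some shortest PI-explanation of x, where an MC-explanation x* matches a PI-explanation z iff x* is obtained from z by setting all features outside the domain of z to false. -/

import Mathlib

open Finset

def trueCount {n : ℕ} (x : Fin n → Bool) : ℕ :=
  (Finset.univ.filter (fun i => x i = true)).card

def Mono {n : ℕ} (f : (Fin n → Bool) → Bool) : Prop :=
  ∀ x y : Fin n → Bool, (∀ i, x i ≤ y i) → f x ≤ f y

def MCExpl {n : ℕ} (f : (Fin n → Bool) → Bool) (x xs : Fin n → Bool) : Prop :=
  f xs = true ∧ (∀ i, xs i ≤ x i) ∧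
    ∀ x' : Fin n → Bool, f x' = true → (∀ i, x' i ≤ x i) → trueCount xs ≤ trueCount x'

def Suff {n : ℕ} (f : (Fin n → Bool) → Bool) (x : Fin n → Bool) (S : Finset (Fin n)) : Prop :=
  ∀ y : Fin n → Bool, (∀ i ∈ S, y i = x i) → f y = f x

def PIExpl {n : ℕ} (f : (Fin n → Bool) → Bool) (x : Fin n → Bool) (S : Finset (Fin n)) : Prop :=
  Suff f x S ∧ ∀ T ⊂ S, ¬ Suff f x T

/-!
If `xs` is an MC-explanation of `x`, its support `S` is sufficient for `x`: by monotonicity every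
`y` agreeing with `x` on `S` lies above `xs`, hence is positive. Conversely, for every sufficient
set `T`, zeroing `x` outside `T` gives a positive instance below `x` with at most `#T` true
features, so `#S = trueCount xs ≤ #T`. Thus `S` is a sufficient set of minimum size, which makes it
a shortest PI-explanation, and `xs` is `x` zeroed outside `S`.
-/

variable {n : ℕ}

/-- An instance matches the PI-explanation `x` restricted to `S` iff it equals `extendFalse x S`. -/
def extendFalse (x : Fin n → Bool) (S : Finset (Fin n)) (i : Fin n) : Bool :=
  if i ∈ S then x i else false

lemma extendFalse_le (x : Fin n → Bool) (S : Finset (Fin n)) (i : Fin n) :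
    extendFalse x S i ≤ x i := by
  unfold extendFalse
  split_ifs <;> simp

lemma trueCount_extendFalse_le (x : Fin n → Bool) (S : Finset (Fin n)) :
    trueCount (extendFalse x S) ≤ S.card := by
  refine card_le_card fun i hi => ?_
  by_contra hiS
  simp [extendFalse, hiS] at hi

lemma extendFalse_support_of_le {x xs : Fin n → Bool} (hle : ∀ i, xs i ≤ x i) (i : Fin n) :
    xs i = extendFalse x (univ.filter fun j => xs j = true) i := by
  cases hi : xs i
  · simp [extendFalse, hi]
  · have hxi : x i = true := le_antisymm (Bool.le_true _) (hi ▸ hle i)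
    simp [extendFalse, hi, hxi]

lemma Mono.eq_true_of_le {f : (Fin n → Bool) → Bool} (hf : Mono f) {x y : Fin n → Bool}
    (hxy : ∀ i, x i ≤ y i) (hx : f x = true) : f y = true :=
  le_antisymm (Bool.le_true _) (hx ▸ hf x y hxy)

lemma Suff.apply_extendFalse {f : (Fin n → Bool) → Bool} {x : Fin n → Bool} {S : Finset (Fin n)}
    (hS : Suff f x S) : f (extendFalse x S) = f x :=
  hS _ fun i hi => by simp [extendFalse, hi]

lemma piExpl_shortest_of_suff_card_le {f : (Fin n → Bool) → Bool} {x : Fin n → Bool} {S : Finset (Fin n)}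
    (hS : Suff f x S) (hmin : ∀ T, Suff f x T → S.card ≤ T.card) :
    PIExpl f x S ∧ ∀ T, PIExpl f x T → S.card ≤ T.card :=
  ⟨⟨hS, fun T hTS hT => (hmin T hT).not_gt (card_lt_card hTS)⟩, fun T hT => hmin T hT.1⟩

namespace MCExpl

variable {f : (Fin n → Bool) → Bool} {x xs : Fin n → Bool}

lemma apply_eq_true (hmc : MCExpl f x xs) (hf : Mono f) : f x = true :=
  hf.eq_true_of_le hmc.2.1 hmc.1

lemma suff_support (hmc : MCExpl f x xs) (hf : Mono f) :
    Suff f x (univ.filter fun i => xs i = true) := by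
  intro y hy
  have hxsy : ∀ i, xs i ≤ y i := fun i => by
    cases hi : xs i
    · simp
    · simp [hy i (by simp [hi]), ← hi, hmc.2.1 i]
  rw [hmc.apply_eq_true hf, hf.eq_true_of_le hxsy hmc.1]

lemma trueCount_le_card (hmc : MCExpl f x xs) (hf : Mono f) {T : Finset (Fin n)}
    (hT : Suff f x T) : trueCount xs ≤ T.card := by
  have hpos : f (extendFalse x T) = true := hT.apply_extendFalse.trans (hmc.apply_eq_true hf)
  exact (hmc.2.2 _ hpos (extendFalse_le x T)).trans (trueCount_extendFalse_le x T)

end MCExpl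

theorem stmt2_general {n : ℕ} (f : (Fin n → Bool) → Bool) (hf : Mono f)
    (x xs : Fin n → Bool) (hmc : MCExpl f x xs) :
    ∃ S : Finset (Fin n), PIExpl f x S ∧
      (∀ T : Finset (Fin n), PIExpl f x T → S.card ≤ T.card) ∧
      ∀ i, xs i = if i ∈ S then x i else false := by
  obtain ⟨hPI, hshortest⟩ :=
    piExpl_shortest_of_suff_card_le (hmc.suff_support hf) fun _ hT => hmc.trueCount_le_card hf hT
  exact ⟨_, hPI, hshortest, extendFalse_support_of_le hmc.2.1⟩

theorem stmt2 {n : ℕ} (f : (Fin n → Bool) → Bool) (hf : Mono f)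
    (x xs : Fin n → Bool) (hx : f x = true) (hmc : MCExpl f x xs) :
    ∃ S : Finset (Fin n), PIExpl f x S ∧
      (∀ T : Finset (Fin n), PIExpl f x T → S.card ≤ T.card) ∧
      ∀ i, xs i = if i ∈ S then x i else false :=
  stmt2_general f hf x xs hmc
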